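/- The canonical gate Can(a,b,c) = exp(-i(π/2)(a XX + b YY + c ZZ)) is equal to the 4×4 matrix with entries: (1,1) and (4,4) entries e^{-icπ/2} cos((a−b)π/2); (1,4) and (4,1) entries −i e^{-icπ/2} sin((a−b)π/2); (2,2) and (3,3) entries e^{icπ/2} cos((a+b)π/2); (2,3) and (3,2) entries −i e^{icπ/2} sin((a+b)π/2); all other entries zero. -/

import Mathlib

/-!
`X⊗X`, `Y⊗Y` and `Z⊗Z` are simultaneously diagonalised by the Bell basis
`|00⟩ ± |11⟩, |01⟩ ± |10⟩`, on which `a XX + b YY + c ZZ` has the eigenvalues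
`c ± (a - b)` and `-c ± (a + b)`. Exponentiating in that basis and changing back, each entry of
`Can(a,b,c)` is a half-sum or half-difference of two exponentials `e^{-iπ(c ± (a - b))/2}`
(resp. `e^{iπ(c ∓ (a + b))/2}`), i.e. a phase times a cosine or a sine.
-/

open Matrix Kronecker

noncomputable section

def PX : Matrix (Fin 2) (Fin 2) ℂ := !![0, 1; 1, 0]
def PY : Matrix (Fin 2) (Fin 2) ℂ := !![0, -Complex.I; Complex.I, 0]
def PZ : Matrix (Fin 2) (Fin 2) ℂ := !![1, 0; 0, -1]

/-- The canonical two-qubit gate `Can(a,b,c) = exp(-i(π/2)(a X⊗X + b Y⊗Y + c Z⊗Z))`. -/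
def Can (a b c : ℝ) : Matrix (Fin 2 × Fin 2) (Fin 2 × Fin 2) ℂ :=
  NormedSpace.exp ((-(Real.pi / 2 : ℂ) * Complex.I) •
    ((a : ℂ) • (PX ⊗ₖ PX) + (b : ℂ) • (PY ⊗ₖ PY) + (c : ℂ) • (PZ ⊗ₖ PZ)))

open NormedSpace

theorem Matrix.exp_reindex {m n 𝔸 : Type*} [Fintype m] [DecidableEq m] [Fintype n]
    [DecidableEq n] [Ring 𝔸] [TopologicalSpace 𝔸] [IsTopologicalRing 𝔸] [T2Space 𝔸] [Algebra ℚ 𝔸]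
    (e : m ≃ n) (A : Matrix m m 𝔸) : exp (reindex e e A) = reindex e e (exp A) := by
  let f := reindexAlgEquiv ℚ 𝔸 e
  have hf : Continuous f := continuous_id.matrix_reindex e e
  have hf' : Continuous f.symm := continuous_id.matrix_reindex e.symm e.symm
  simp_rw [exp_eq_tsum_rat]
  refine Eq.symm ((Function.LeftInverse.map_tsum _ hf hf' f.left_inv).trans ?_)
  simp [f, map_pow]

def xMatrix (p q r s : ℂ) : Matrix (Fin 4) (Fin 4) ℂ :=
  !![p, 0, 0, q; 0, r, s, 0; 0, s, r, 0; q, 0, 0, p]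

-- The columns are the unnormalised Bell states `|00⟩ + |11⟩, |01⟩ + |10⟩, |01⟩ - |10⟩, |00⟩ - |11⟩`.
def bell : Matrix (Fin 4) (Fin 4) ℂ :=
  !![1, 0, 0, 1; 0, 1, 1, 0; 0, 1, -1, 0; 1, 0, 0, -1]

theorem bell_mul_self : bell * bell = (2 : ℂ) • 1 := by
  ext i j
  fin_cases i <;> fin_cases j <;> simp [bell, mul_apply, Fin.sum_univ_four] <;> norm_num

def bellUnit : (Matrix (Fin 4) (Fin 4) ℂ)ˣ where
  val := bell
  inv := (2⁻¹ : ℂ) • bell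
  val_inv := by rw [mul_smul_comm, bell_mul_self, smul_smul]; norm_num
  inv_val := by rw [smul_mul_assoc, bell_mul_self, smul_smul]; norm_num

theorem xMatrix_eq_bell_conj (p q r s : ℂ) :
    xMatrix p q r s =
      bellUnit * diagonal ![p + q, r + s, r - s, p - q] *
        (bellUnit⁻¹ : (Matrix (Fin 4) (Fin 4) ℂ)ˣ) := by
  ext i j
  fin_cases i <;> fin_cases j <;>
    simp [xMatrix, bellUnit, bell, mul_apply, Fin.sum_univ_four, vecMul_diagonal] <;> ring

theorem smul_xMatrix (t p q r s : ℂ) :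
    t • xMatrix p q r s = xMatrix (t * p) (t * q) (t * r) (t * s) := by
  ext i j
  fin_cases i <;> fin_cases j <;> simp [xMatrix]

theorem exp_xMatrix (p q r s : ℂ) :
    exp (xMatrix p q r s) =
      xMatrix (Complex.exp p * Complex.cosh q) (Complex.exp p * Complex.sinh q)
        (Complex.exp r * Complex.cosh s) (Complex.exp r * Complex.sinh s) := by
  rw [xMatrix_eq_bell_conj, xMatrix_eq_bell_conj, Matrix.exp_units_conj, Matrix.exp_diagonal]
  simp only [← mul_add, ← mul_sub, Complex.cosh_add_sinh, Complex.cosh_sub_sinh,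
    ← Complex.exp_add, ← sub_eq_add_neg]
  congr
  ext i
  fin_cases i <;> simp [← Complex.exp_eq_exp_ℂ]

theorem exp_neg_mul_I_smul_xMatrix (t p q r s : ℂ) :
    exp ((-t * Complex.I) • xMatrix p q r s) =
      xMatrix (Complex.exp (-(t * p) * Complex.I) * Complex.cos (t * q))
        (-Complex.I * Complex.exp (-(t * p) * Complex.I) * Complex.sin (t * q))
        (Complex.exp (-(t * r) * Complex.I) * Complex.cos (t * s))
        (-Complex.I * Complex.exp (-(t * r) * Complex.I) * Complex.sin (t * s)) := by
  have hcosh (x : ℂ) : Complex.cosh (-t * Complex.I * x) = Complex.cos (t * x) := by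
    rw [show -t * Complex.I * x = -(t * x) * Complex.I by ring, Complex.cosh_mul_I, Complex.cos_neg]
  have hsinh (x : ℂ) : Complex.sinh (-t * Complex.I * x) = -Complex.I * Complex.sin (t * x) := by
    rw [show -t * Complex.I * x = -(t * x) * Complex.I by ring, Complex.sinh_mul_I,
      Complex.sin_neg]
    ring
  rw [smul_xMatrix, exp_xMatrix, hcosh, hsinh, hcosh, hsinh]
  congr 1 <;> ring_nf

theorem reindex_pauli_sum (a b c : ℂ) :
    reindex finProdFinEquiv finProdFinEquiv (a • (PX ⊗ₖ PX) + b • (PY ⊗ₖ PY) + c • (PZ ⊗ₖ PZ)) =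
      xMatrix c (a - b) (-c) (a + b) := by
  ext i j
  fin_cases i <;> fin_cases j <;>
    simp [xMatrix, PX, PY, PZ, finProdFinEquiv, Fin.divNat, Fin.modNat] <;> ring

theorem can_matrix_entries (a b c : ℝ) :
    Matrix.reindex finProdFinEquiv finProdFinEquiv (Can a b c) =
      !![Complex.exp (-(c * Real.pi / 2 : ℂ) * Complex.I) * Real.cos ((a - b) * Real.pi / 2), 0,
            0, -Complex.I * Complex.exp (-(c * Real.pi / 2 : ℂ) * Complex.I) *
              Real.sin ((a - b) * Real.pi / 2);
          0, Complex.exp ((c * Real.pi / 2 : ℂ) * Complex.I) * Real.cos ((a + b) * Real.pi / 2),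
            -Complex.I * Complex.exp ((c * Real.pi / 2 : ℂ) * Complex.I) *
              Real.sin ((a + b) * Real.pi / 2), 0;
          0, -Complex.I * Complex.exp ((c * Real.pi / 2 : ℂ) * Complex.I) *
              Real.sin ((a + b) * Real.pi / 2),
            Complex.exp ((c * Real.pi / 2 : ℂ) * Complex.I) * Real.cos ((a + b) * Real.pi / 2), 0;
          -Complex.I * Complex.exp (-(c * Real.pi / 2 : ℂ) * Complex.I) *
              Real.sin ((a - b) * Real.pi / 2), 0, 0,
            Complex.exp (-(c * Real.pi / 2 : ℂ) * Complex.I) * Real.cos ((a - b) * Real.pi / 2)] := by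
  rw [Can, ← Matrix.exp_reindex, ← coe_reindexLinearEquiv ℂ ℂ, map_smul, coe_reindexLinearEquiv,
    reindex_pauli_sum, exp_neg_mul_I_smul_xMatrix]
  change xMatrix _ _ _ _ = xMatrix _ _ _ _
  congr 1 <;> push_cast <;> ring_nf
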